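/- arXiv:1209.0809 — 4 statements merged into one kernel-verified Lean document; each statement's English description precedes it below -/
import Mathlib

section
/- Let (x_n) be a bounded sequence in ℓ²(ℤ, ℝᵈ) and x ∈ ℓ²(ℤ, ℝᵈ). Then ‖x_n − x‖_∞ → 0 (convergence in the supremum norm) if and only if (x_n) converges weakly to x in ℓ² and (x_n) vanishes uniformly at infinity. -/
/-! A bounded sequence in `ℓ²` converges weakly iff it converges coordinatewise: the functionals
`⟪x n, ·⟫` are equicontinuous, so the set of `z` along which they converge is closed, and it
contains the finitely supported sequences, which are dense. Coordinatewise convergence is uniform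
on the finitely many sites `|m| < m₀`, and since `x₀` has small tails, `x n - x₀` is uniformly small
on the remaining sites exactly when `x n` is. -/

open Filter Topology

noncomputable section

/-- The Hilbert space `ℓ²(ℤ, ℝᵈ)` of square-summable doubly infinite sequences. -/
abbrev L2 (d : ℕ) := lp (fun _ : ℤ => EuclideanSpace ℝ (Fin d)) 2

/-- Weak convergence in the Hilbert space `ℓ²(ℤ, ℝᵈ)`. -/
def WeakTendsto {d : ℕ} (x : ℕ → L2 d) (y : L2 d) : Prop :=
  ∀ z : L2 d, Tendsto (fun n => (inner ℝ (x n) z : ℝ)) atTop (nhds (inner ℝ y z))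

/-- A sequence `(x_n)` in `ℓ²(ℤ, ℝᵈ)` vanishes uniformly at infinity if for every `ε > 0`
there are `n₀, m₀` such that `|x_n(m)| ≤ ε` whenever `n ≥ n₀` and `|m| ≥ m₀`. -/
def VanishesUniformlyAtInfinity {d : ℕ} (x : ℕ → L2 d) : Prop :=
  ∀ ε > (0 : ℝ), ∃ n₀ m₀ : ℕ, ∀ n ≥ n₀, ∀ m : ℤ, (m₀ : ℤ) ≤ |m| → ‖x n m‖ ≤ ε

theorem Memℓp.tendsto_norm_cofinite_zero {ι : Type*} {E : ι → Type*}
    [∀ i, NormedAddCommGroup (E i)] {p : ENNReal} (hp : 0 < p.toReal) {f : ∀ i, E i}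
    (hf : Memℓp f p) : Tendsto (fun i => ‖f i‖) cofinite (𝓝 0) := by
  have h := ((hf.summable hp).tendsto_cofinite_zero).rpow_const (p := p.toReal⁻¹)
    (Or.inr (inv_nonneg.2 hp.le))
  rw [Real.zero_rpow (inv_ne_zero hp.ne')] at h
  exact h.congr fun i => Real.rpow_rpow_inv (norm_nonneg _) hp.ne'

theorem Int.exists_forall_le_abs_of_eventually_cofinite {P : ℤ → Prop}
    (h : ∀ᶠ m in cofinite, P m) : ∃ m₀ : ℕ, ∀ m : ℤ, (m₀ : ℤ) ≤ |m| → P m := by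
  rw [Int.cofinite_eq, eventually_sup, eventually_atBot, eventually_atTop] at h
  obtain ⟨⟨a, ha⟩, ⟨b, hb⟩⟩ := h
  refine ⟨a.natAbs + b.natAbs + 1, fun m hm => ?_⟩
  rcases abs_cases m with ⟨hm', _⟩ | ⟨hm', _⟩
  · exact hb m (by omega)
  · exact ha m (by omega)

theorem lp.exists_forall_le_abs_norm_le {E : ℤ → Type*} [∀ m, NormedAddCommGroup (E m)]
    {p : ENNReal} (hp : 0 < p.toReal) (f : lp E p) {ε : ℝ} (hε : 0 < ε) :
    ∃ m₀ : ℕ, ∀ m : ℤ, (m₀ : ℤ) ≤ |m| → ‖f m‖ ≤ ε :=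
  Int.exists_forall_le_abs_of_eventually_cofinite <|
    (((lp.memℓp f).tendsto_norm_cofinite_zero hp).eventually_lt_const hε).mono fun _ => le_of_lt

section InnerProductSpace

variable {𝕜 : Type*} [RCLike 𝕜] {α : Type*} {l : Filter α}

theorem tendsto_of_forall_tendsto_inner {E : Type*} [NormedAddCommGroup E]
    [InnerProductSpace 𝕜 E] [FiniteDimensional 𝕜 E] {y : α → E} {y₀ : E}
    (h : ∀ v, Tendsto (fun a => inner 𝕜 (y a) v) l (𝓝 (inner 𝕜 y₀ v))) :
    Tendsto y l (𝓝 y₀) := by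
  let b := stdOrthonormalBasis 𝕜 E
  have hcoord : ∀ i, Tendsto (fun a => inner 𝕜 (b i) (y a)) l (𝓝 (inner 𝕜 (b i) y₀)) := by
    intro i
    simpa only [Function.comp_def, inner_conj_symm] using
      (RCLike.continuous_conj.tendsto _).comp (h (b i))
  rw [← b.sum_repr' y₀, show y = fun a => ∑ i, inner 𝕜 (b i) (y a) • b i from
    funext fun a => (b.sum_repr' (y a)).symm]
  exact tendsto_finsetSum _ fun i _ => (hcoord i).smul_const (b i)

variable {ι : Type*} {E : ι → Type*} [∀ i, NormedAddCommGroup (E i)]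
  [∀ i, InnerProductSpace 𝕜 (E i)] {y : α → lp E 2} {y₀ : lp E 2}

theorem lp.tendsto_apply_of_forall_tendsto_inner [∀ i, FiniteDimensional 𝕜 (E i)]
    (h : ∀ z, Tendsto (fun a => inner 𝕜 (y a) z) l (𝓝 (inner 𝕜 y₀ z))) (i : ι) :
    Tendsto (fun a => y a i) l (𝓝 (y₀ i)) := by
  classical
  refine tendsto_of_forall_tendsto_inner (𝕜 := 𝕜) fun v => ?_
  simpa only [lp.inner_single_right] using h (lp.single 2 i v)

theorem lp.tendsto_inner_of_bounded_of_tendsto_apply {C : ℝ} (hC : ∀ a, ‖y a‖ ≤ C)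
    (h : ∀ i, Tendsto (fun a => y a i) l (𝓝 (y₀ i))) (z : lp E 2) :
    Tendsto (fun a => inner 𝕜 (y a) z) l (𝓝 (inner 𝕜 y₀ z)) := by
  classical
  have hbdd : ∃ C, ∀ a, ‖innerSL 𝕜 (y a)‖ ≤ C :=
    ⟨C, fun a => (innerSL_apply_norm 𝕜 (y a)).trans_le (hC a)⟩
  have hequi : Equicontinuous fun a => ⇑(innerSL 𝕜 (y a)) :=
    ((NormedSpace.equicontinuous_TFAE fun a => innerSL 𝕜 (y a)).out 5 1).1 hbdd
  have hclosed := hequi.isClosed_setOfPred_tendsto (l := l) (innerSL 𝕜 y₀).continuous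
  refine hclosed.mem_of_tendsto (lp.hasSum_single ENNReal.ofNat_ne_top z)
    (Eventually.of_forall fun s => ?_)
  simp only [Set.mem_ofPred_eq, innerSL_apply_apply, inner_sum, lp.inner_single_right]
  exact tendsto_finsetSum _ fun i _ =>
    ((continuous_id.inner continuous_const).tendsto _).comp (h i)

end InnerProductSpace

def SupNormTendsto {d : ℕ} (x : ℕ → L2 d) (x₀ : L2 d) : Prop :=
  ∀ ε > (0 : ℝ), ∃ n₀ : ℕ, ∀ n ≥ n₀, ∀ m : ℤ, ‖x n m - x₀ m‖ ≤ ε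

namespace SupNormTendsto

variable {d : ℕ} {x : ℕ → L2 d} {x₀ : L2 d}

theorem tendsto_apply (h : SupNormTendsto x x₀) (m : ℤ) :
    Tendsto (fun n => x n m) atTop (𝓝 (x₀ m)) :=
  Metric.nhds_basis_closedBall.tendsto_right_iff.2 fun ε hε =>
    (eventually_atTop.2 (h ε hε)).mono fun n hn => by
      rw [Metric.mem_closedBall, dist_eq_norm]
      exact hn m

theorem vanishesUniformlyAtInfinity (h : SupNormTendsto x x₀) :
    VanishesUniformlyAtInfinity x := by
  intro ε hε
  obtain ⟨n₀, hn₀⟩ := h (ε / 2) (half_pos hε)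
  obtain ⟨m₀, hm₀⟩ := lp.exists_forall_le_abs_norm_le (by norm_num) x₀ (half_pos hε)
  refine ⟨n₀, m₀, fun n hn m hm => ?_⟩
  calc ‖x n m‖ ≤ ‖x n m - x₀ m‖ + ‖x₀ m‖ := by simpa using norm_add_le (x n m - x₀ m) (x₀ m)
    _ ≤ ε / 2 + ε / 2 := add_le_add (hn₀ n hn m) (hm₀ m hm)
    _ = ε := add_halves ε

theorem of_tendsto_apply_of_vanishesUniformlyAtInfinity
    (hpt : ∀ m, Tendsto (fun n => x n m) atTop (𝓝 (x₀ m)))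
    (hv : VanishesUniformlyAtInfinity x) : SupNormTendsto x x₀ := by
  intro ε hε
  obtain ⟨n₁, m₁, hx⟩ := hv (ε / 2) (half_pos hε)
  obtain ⟨m₂, hx₀⟩ := lp.exists_forall_le_abs_norm_le (by norm_num) x₀ (half_pos hε)
  set M : ℤ := max m₁ m₂
  have hnear : ∀ᶠ n in atTop, ∀ m ∈ Finset.Ioo (-M) M, ‖x n m - x₀ m‖ ≤ ε :=
    (eventually_all_finset _).2 fun m _ =>
      ((hpt m).eventually (Metric.closedBall_mem_nhds _ hε)).mono fun n hn => by
        rwa [dist_eq_norm] at hn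
  obtain ⟨n₂, hn₂⟩ := eventually_atTop.1 hnear
  refine ⟨max n₁ n₂, fun n hn m => ?_⟩
  by_cases hm : M ≤ |m|
  · calc ‖x n m - x₀ m‖ ≤ ‖x n m‖ + ‖x₀ m‖ := norm_sub_le _ _
      _ ≤ ε / 2 + ε / 2 :=
        add_le_add (hx n (le_of_max_le_left hn) m (by omega)) (hx₀ m (by omega))
      _ = ε := add_halves ε
  · exact hn₂ n (le_of_max_le_right hn) m (Finset.mem_Ioo.2 (abs_lt.1 (not_le.1 hm)))

end SupNormTendsto

/-- For a bounded sequence `(x_n)` in `ℓ²(ℤ, ℝᵈ)` and `x ∈ ℓ²(ℤ, ℝᵈ)`: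
`‖x_n − x‖_∞ → 0` (uniform convergence of the sequences) iff `x_n ⇀ x` weakly in `ℓ²`
and `(x_n)` vanishes uniformly at infinity. -/
theorem sup_norm_convergence_iff_weak_and_vanishing {d : ℕ}
    (x : ℕ → L2 d) (x₀ : L2 d) (hbdd : ∃ C : ℝ, ∀ n, ‖x n‖ ≤ C) :
    (∀ ε > (0 : ℝ), ∃ n₀ : ℕ, ∀ n ≥ n₀, ∀ m : ℤ, ‖x n m - x₀ m‖ ≤ ε) ↔
      (WeakTendsto x x₀ ∧ VanishesUniformlyAtInfinity x) := by
  obtain ⟨C, hC⟩ := hbdd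
  change SupNormTendsto x x₀ ↔ _
  constructor
  · intro h
    exact ⟨lp.tendsto_inner_of_bounded_of_tendsto_apply hC h.tendsto_apply,
      h.vanishesUniformlyAtInfinity⟩
  · rintro ⟨hw, hv⟩
    exact .of_tendsto_apply_of_vanishesUniformlyAtInfinity
      (lp.tendsto_apply_of_forall_tendsto_inner hw) hv
end
end

section
/- Let (x_n) be a bounded sequence in ℓ²(ℤ, ℝᵈ). Then at least one of the following holds: (i) (x_n) vanishes uniformly at infinity; (ii) there exist a sequence (l_k) ⊂ ℤ with |l_k| → ∞ and a subsequence (x_{n_k}) such that the shifted sequence x̃_k(m) := x_{n_k}(m + l_k) converges weakly in ℓ² to some x̃ ≠ 0. -/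
/-!
If `(x_n)` does not vanish uniformly at infinity, there are `ε > 0`, indices `n_k → ∞` and sites
`|l_k| ≥ k` with `‖x_{n_k}(l_k)‖ > ε`. Shifting by `l_k` moves these large entries to the origin
without changing norms. Bounded sequences in `ℓ²(ℤ, ℝᵈ)` have pointwise convergent subsequences
(Tychonoff, the fibres being finite dimensional), and bounded pointwise convergence implies weak
convergence, because it gives convergence of inner products against finitely supported vectors,
which are dense. The weak limit is nonzero since its entry at the origin has norm at least `ε`.
-/

open Filter Topology

noncomputable section

open scoped ENNReal InnerProductSpace

theorem Memℓp.comp_equiv {α β : Type*} {E : Type*} [NormedAddCommGroup E] {p : ℝ≥0∞}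
    {f : α → E} (hf : Memℓp f p) (e : β ≃ α) : Memℓp (f ∘ e) p := by
  rcases p.trichotomy with rfl | rfl | hp
  · exact memℓp_zero ((memℓp_zero_iff.1 hf).preimage e.injective.injOn)
  · apply memℓp_infty
    convert memℓp_infty_iff.1 hf using 1
    exact e.surjective.range_comp fun a => ‖f a‖
  · exact memℓp_gen (e.summable_iff.2 (hf.summable hp))

theorem equicontinuous_inner_of_norm_le {𝕜 F : Type*} [RCLike 𝕜] [NormedAddCommGroup F]
    [InnerProductSpace 𝕜 F] {ι : Type*} {y : ι → F} {C : ℝ} (hC : ∀ n, ‖y n‖ ≤ C) :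
    Equicontinuous fun n (w : F) => ⟪y n, w⟫_𝕜 := by
  refine (LipschitzWith.uniformEquicontinuous _ C.toNNReal fun n =>
    LipschitzWith.of_dist_le_mul fun w w' => ?_).equicontinuous
  rw [dist_eq_norm, ← inner_sub_right, dist_eq_norm]
  exact (norm_inner_le_norm _ _).trans
    (by gcongr; exact (hC n).trans (Real.le_coe_toNNReal C))

namespace lp

section Shift

variable {E : Type*} [NormedAddCommGroup E] {p : ℝ≥0∞}

def shift (f : lp (fun _ : ℤ => E) p) (l : ℤ) : lp (fun _ : ℤ => E) p :=
  ⟨fun i => f (i + l), (lp.memℓp f).comp_equiv (Equiv.addRight l)⟩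

@[simp]
theorem shift_apply (f : lp (fun _ : ℤ => E) p) (l i : ℤ) : shift f l i = f (i + l) := rfl

theorem norm_shift (hp : 0 < p.toReal) (f : lp (fun _ : ℤ => E) p) (l : ℤ) :
    ‖shift f l‖ = ‖f‖ := by
  rw [norm_eq_tsum_rpow hp, norm_eq_tsum_rpow hp]
  exact congrArg (· ^ (1 / p.toReal)) ((Equiv.addRight l).tsum_eq fun i => ‖f i‖ ^ p.toReal)

end Shift

section Weak

variable {𝕜 ι : Type*} [RCLike 𝕜] {G : ι → Type*} [∀ i, NormedAddCommGroup (G i)]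
  [∀ i, InnerProductSpace 𝕜 (G i)]

theorem tendsto_inner_of_tendsto_apply {y : ℕ → lp G 2} {y₀ : lp G 2} {C : ℝ}
    (hC : ∀ n, ‖y n‖ ≤ C) (hy : ∀ i, Tendsto (fun n => y n i) atTop (𝓝 (y₀ i))) (z : lp G 2) :
    Tendsto (fun n => ⟪y n, z⟫_𝕜) atTop (𝓝 ⟪y₀, z⟫_𝕜) := by
  classical
  have hclosed : IsClosed {w : lp G 2 | Tendsto (fun n => ⟪y n, w⟫_𝕜) atTop (𝓝 ⟪y₀, w⟫_𝕜)} :=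
    (equicontinuous_inner_of_norm_le hC).isClosed_setOfPred_tendsto
      (continuous_const.inner continuous_id)
  have hfinite (s : Finset ι) : Tendsto (fun n => ⟪y n, ∑ i ∈ s, lp.single 2 i (z i)⟫_𝕜) atTop
      (𝓝 ⟪y₀, ∑ i ∈ s, lp.single 2 i (z i)⟫_𝕜) := by
    simp only [inner_sum, lp.inner_single_right]
    exact tendsto_finsetSum _ fun i _ => (hy i).inner tendsto_const_nhds
  exact hclosed.mem_of_tendsto (lp.hasSum_single ENNReal.ofNat_ne_top z)
    (Eventually.of_forall hfinite)

end Weak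

theorem exists_strictMono_tendsto_apply {ι : Type*} [Countable ι] {E : ι → Type*}
    [∀ i, NormedAddCommGroup (E i)] [∀ i, ProperSpace (E i)] {p : ℝ≥0∞} [Fact (1 ≤ p)]
    {y : ℕ → lp E p} {C : ℝ} (hC : ∀ n, ‖y n‖ ≤ C) :
    ∃ (y₀ : lp E p) (ψ : ℕ → ℕ), StrictMono ψ ∧
      ∀ i, Tendsto (fun n => y (ψ n) i) atTop (𝓝 (y₀ i)) := by
  have hp : p ≠ 0 := (zero_lt_one.trans_le (Fact.out : 1 ≤ p)).ne'
  have hK : IsCompact (Set.univ.pi fun i => Metric.closedBall (0 : E i) C) :=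
    isCompact_univ_pi fun i => isCompact_closedBall _ _
  obtain ⟨f, -, ψ, hψ, hlim⟩ := hK.isSeqCompact.subseq_of_frequently_in (x := fun n => ⇑(y n))
    (Frequently.of_forall fun n i _ => by
      simpa using (norm_apply_le_norm hp (y n) i).trans (hC n))
  have hbdd : Bornology.IsBounded (Set.range (y ∘ ψ)) :=
    isBounded_iff_forall_norm_le.2 ⟨C, by rintro _ ⟨n, rfl⟩; exact hC _⟩
  exact ⟨⟨f, memℓp_of_tendsto hbdd hlim⟩, ψ, hψ, tendsto_pi_nhds.1 hlim⟩

end lp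

theorem exists_strictMono_of_not_vanishesUniformlyAtInfinity {d : ℕ} {x : ℕ → L2 d}
    (h : ¬ VanishesUniformlyAtInfinity x) :
    ∃ ε > 0, ∃ (φ : ℕ → ℕ) (l : ℕ → ℤ), StrictMono φ ∧ (∀ k : ℕ, (k : ℤ) ≤ |l k|) ∧
      ∀ k, ε < ‖x (φ k) (l k)‖ := by
  unfold VanishesUniformlyAtInfinity at h
  push Not at h
  obtain ⟨ε, hε, h⟩ := h
  obtain ⟨φ, hφ, hl⟩ := extraction_forall_of_frequently
    (P := fun k n => ∃ l : ℤ, (k : ℤ) ≤ |l| ∧ ε < ‖x n l‖)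
    fun k => frequently_atTop.2 fun n₀ => h n₀ k
  choose l hl using hl
  exact ⟨ε, hε, φ, l, hφ, fun k => (hl k).1, fun k => (hl k).2⟩

/-- Shifted subsequence lemma: a bounded sequence in `ℓ²(ℤ, ℝᵈ)` either vanishes
uniformly at infinity, or some sequence of shifts (with `|l_k| → ∞`) of a subsequence
converges weakly to a nonzero limit. -/
theorem shifted_subsequence_lemma {d : ℕ} (x : ℕ → L2 d)
    (hbdd : ∃ C : ℝ, ∀ n, ‖x n‖ ≤ C) :
    VanishesUniformlyAtInfinity x ∨
      ∃ (l : ℕ → ℤ) (φ : ℕ → ℕ) (xt : ℕ → L2 d) (xlim : L2 d),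
        Tendsto (fun k => |l k|) atTop atTop ∧ StrictMono φ ∧
        (∀ k m, xt k m = x (φ k) (m + l k)) ∧
        WeakTendsto xt xlim ∧ xlim ≠ 0 := by
  refine or_iff_not_imp_left.2 fun hvan => ?_
  obtain ⟨C, hC⟩ := hbdd
  obtain ⟨ε, hε, φ, l, hφ, hl, hxl⟩ := exists_strictMono_of_not_vanishesUniformlyAtInfinity hvan
  set y : ℕ → L2 d := fun k => lp.shift (x (φ k)) (l k)
  have hy (k : ℕ) : ‖y k‖ ≤ C := (lp.norm_shift (by norm_num) _ _).trans_le (hC _)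
  obtain ⟨xlim, ψ, hψ, hlim⟩ := lp.exists_strictMono_tendsto_apply hy
  refine ⟨l ∘ ψ, φ ∘ ψ, y ∘ ψ, xlim, ?_, hφ.comp hψ, fun k m => rfl,
    lp.tendsto_inner_of_tendsto_apply (fun k => hy (ψ k)) hlim, ?_⟩
  · exact tendsto_atTop_mono (fun k => hl (ψ k))
      (tendsto_natCast_atTop_atTop.comp hψ.tendsto_atTop)
  · rintro rfl
    have : ε ≤ ‖(0 : L2 d) 0‖ := ge_of_tendsto (hlim 0).norm
      (Eventually.of_forall fun k => by simpa [y] using (hxl (ψ k)).le)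
    rw [lp.coeFn_zero, Pi.zero_apply, norm_zero] at this
    linarith
end
end

section
/- Under the hypotheses of the preceding setting (f_n C¹ with f_n(0)=0, derivatives Df_n equicontinuous uniformly in n on bounded sets, sup_n |Df_n(0)| < ∞), the substitution operator F: ℓ²(ℤ, ℝᵈ) → ℓ²(ℤ, ℝᵈ), F(x) = (f_n(x(n))), is Fréchet differentiable at every x, with derivative DF(x) given by the multiplication operator y ↦ (Df_n(x(n)) y(n)), and DF: ℓ² → L(ℓ²) is continuous in operator norm. -/
/-!
Everything reduces to coordinatewise estimates: an `ℓᵖ` norm (`p < ∞`) is at most `C‖v‖` as soon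
as each coordinate is at most `C‖v i‖`. Fix `x` and `ε`, and let `δ` be the modulus of uniform
equicontinuity of the `Df_n` at `ε` on the ball of radius `‖x‖ + 1`. If `‖h‖ < min δ 1`, the points
`x i`, `x i + h i` and the segment between them lie in that ball, so the mean value inequality
bounds the `i`-th coordinate of `F (x + h) - F x - T x h` by `ε ‖h i‖`; likewise
`‖T y - T x‖ ≤ ε` whenever `‖y - x‖ < min δ 1`.
-/

open Filter Topology
open scoped ENNReal

noncomputable section

namespace lp

variable {ι : Type*} {E G : ι → Type*} [∀ i, NormedAddCommGroup (E i)]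
  [∀ i, NormedAddCommGroup (G i)] {p : ℝ≥0∞} [Fact (1 ≤ p)]

theorem norm_le_mul_norm_of_forall_norm_apply_le (hp : p ≠ ∞) {u : lp E p} {v : lp G p}
    {C : ℝ} (hC : 0 ≤ C) (h : ∀ i, ‖u i‖ ≤ C * ‖v i‖) : ‖u‖ ≤ C * ‖v‖ := by
  have hp₀ : 0 < p.toReal :=
    ENNReal.toReal_pos (zero_lt_one.trans_le Fact.out).ne' hp
  refine norm_le_of_forall_sum_le hp₀ (by positivity) fun s => ?_
  calc ∑ i ∈ s, ‖u i‖ ^ p.toReal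
      ≤ ∑ i ∈ s, C ^ p.toReal * ‖v i‖ ^ p.toReal := by
        gcongr with i
        rw [← Real.mul_rpow hC (norm_nonneg _)]
        exact Real.rpow_le_rpow (norm_nonneg _) (h i) hp₀.le
    _ = C ^ p.toReal * ∑ i ∈ s, ‖v i‖ ^ p.toReal := (Finset.mul_sum ..).symm
    _ ≤ (C * ‖v‖) ^ p.toReal := by
        rw [Real.mul_rpow hC (norm_nonneg _)]
        gcongr
        exact sum_rpow_le_norm_rpow hp₀ v s

theorem norm_apply_le_add_of_norm_sub_le (x y : lp E p) (i : ι) {r : ℝ} (h : ‖y - x‖ ≤ r) :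
    ‖y i‖ ≤ ‖x‖ + r := by
  have hp : p ≠ 0 := (zero_lt_one.trans_le Fact.out).ne'
  calc ‖y i‖ ≤ ‖y‖ := norm_apply_le_norm hp y i
    _ ≤ ‖x‖ + ‖y - x‖ := norm_le_insert' y x
    _ ≤ ‖x‖ + r := by gcongr

theorem opNorm_le_of_forall_apply_eq {𝕜 : Type*} [NontriviallyNormedField 𝕜]
    [∀ i, NormedSpace 𝕜 (E i)] [∀ i, NormedSpace 𝕜 (G i)] (hp : p ≠ ∞)
    {S : lp E p →L[𝕜] lp G p} {A : ∀ i, E i →L[𝕜] G i} (hS : ∀ v i, S v i = A i (v i))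
    {C : ℝ} (hC : 0 ≤ C) (hA : ∀ i, ‖A i‖ ≤ C) : ‖S‖ ≤ C :=
  S.opNorm_le_bound hC fun v => norm_le_mul_norm_of_forall_norm_apply_le hp hC fun i =>
    (hS v i).symm ▸ (A i).le_of_opNorm_le (hA i) (v i)

end lp

variable {E G : Type*} [NormedAddCommGroup E] [NormedSpace ℝ E]
  [NormedAddCommGroup G] [NormedSpace ℝ G]

theorem norm_image_sub_sub_fderiv_le_of_norm_fderiv_sub_lt {g : E → G}
    (hg : Differentiable ℝ g) {M δ ε : ℝ}
    (hg' : ∀ y₁ y₂ : E, ‖y₁‖ ≤ M → ‖y₂‖ ≤ M → ‖y₁ - y₂‖ < δ →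
      ‖fderiv ℝ g y₁ - fderiv ℝ g y₂‖ < ε)
    {a b : E} (ha : ‖a‖ ≤ M) (hb : ‖b‖ ≤ M) (hab : ‖b - a‖ < δ) :
    ‖g b - g a - fderiv ℝ g a (b - a)‖ ≤ ε * ‖b - a‖ := by
  have hconv : Convex ℝ (Metric.closedBall (0 : E) M ∩ Metric.ball a δ) :=
    (convex_closedBall 0 M).inter (convex_ball a δ)
  have hmem : ∀ z, z ∈ Metric.closedBall (0 : E) M ∩ Metric.ball a δ ↔
      ‖z‖ ≤ M ∧ ‖z - a‖ < δ := by
    simp [dist_eq_norm]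
  refine hconv.norm_image_sub_le_of_norm_fderiv_le' (fun z _ => hg z)
    (fun z hz => (hg' z a ((hmem z).1 hz).1 ha ((hmem z).1 hz).2).le)
    ((hmem a).2 ⟨ha, by simpa using (norm_nonneg _).trans_lt hab⟩) ((hmem b).2 ⟨hb, hab⟩)

section Substitution

variable {ι : Type*} {p : ℝ≥0∞} [Fact (1 ≤ p)]

def EquicontinuousFDerivOnBalls (f : ι → E → G) : Prop :=
  ∀ M > (0 : ℝ), ∀ ε > (0 : ℝ), ∃ δ > (0 : ℝ),
    ∀ y₁ y₂ : E, ‖y₁‖ ≤ M → ‖y₂‖ ≤ M → ‖y₁ - y₂‖ < δ →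
      ∀ i, ‖fderiv ℝ (f i) y₁ - fderiv ℝ (f i) y₂‖ < ε

variable {f : ι → E → G}
  {T : lp (fun _ : ι => E) p → (lp (fun _ : ι => E) p →L[ℝ] lp (fun _ : ι => G) p)}

theorem hasFDerivAt_lp_substitution (hp : p ≠ ∞) (hf : ∀ i, Differentiable ℝ (f i))
    (hequi : EquicontinuousFDerivOnBalls f) (hT : ∀ x y i, T x y i = fderiv ℝ (f i) (x i) (y i))
    {F : lp (fun _ : ι => E) p → lp (fun _ : ι => G) p} (hF : ∀ x i, F x i = f i (x i))
    (x : lp (fun _ : ι => E) p) : HasFDerivAt F (T x) x := by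
  have hp₀ : p ≠ 0 := (zero_lt_one.trans_le Fact.out).ne'
  rw [hasFDerivAt_iff_isLittleO_nhds_zero, Asymptotics.isLittleO_iff]
  intro ε hε
  obtain ⟨δ, hδ, hfδ⟩ := hequi (‖x‖ + 1) (by positivity) ε hε
  filter_upwards [Metric.ball_mem_nhds 0 (lt_min hδ one_pos)] with h hh
  rw [mem_ball_zero_iff, lt_min_iff] at hh
  refine lp.norm_le_mul_norm_of_forall_norm_apply_le hp hε.le fun i => ?_
  have hx : ‖x i‖ ≤ ‖x‖ + 1 := lp.norm_apply_le_add_of_norm_sub_le x x i (by simp)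
  have hxh : ‖(x + h) i‖ ≤ ‖x‖ + 1 :=
    lp.norm_apply_le_add_of_norm_sub_le x (x + h) i (by simpa using hh.2.le)
  have hhi : ‖(x + h) i - x i‖ < δ := by
    simpa using (lp.norm_apply_le_norm hp₀ h i).trans_lt hh.1
  simpa [hF, hT] using norm_image_sub_sub_fderiv_le_of_norm_fderiv_sub_lt (hf i)
    (fun y₁ y₂ h₁ h₂ h₁₂ => hfδ y₁ y₂ h₁ h₂ h₁₂ i) hx hxh hhi

theorem continuous_lp_substitution_fderiv (hp : p ≠ ∞) (hequi : EquicontinuousFDerivOnBalls f)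
    (hT : ∀ x y i, T x y i = fderiv ℝ (f i) (x i) (y i)) : Continuous T := by
  have hp₀ : p ≠ 0 := (zero_lt_one.trans_le Fact.out).ne'
  refine Metric.continuous_iff.2 fun x ε hε => ?_
  obtain ⟨δ, hδ, hfδ⟩ := hequi (‖x‖ + 1) (by positivity) (ε / 2) (half_pos hε)
  refine ⟨min δ 1, lt_min hδ one_pos, fun y hy => ?_⟩
  rw [dist_eq_norm] at hy ⊢
  rw [lt_min_iff] at hy
  have hdiff : ∀ i, ‖fderiv ℝ (f i) (y i) - fderiv ℝ (f i) (x i)‖ ≤ ε / 2 := fun i =>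
    (hfδ _ _ (lp.norm_apply_le_add_of_norm_sub_le x y i hy.2.le)
      (lp.norm_apply_le_add_of_norm_sub_le x x i (by simp))
      (by simpa using (lp.norm_apply_le_norm hp₀ (y - x) i).trans_lt hy.1) i).le
  calc ‖T y - T x‖ ≤ ε / 2 :=
        lp.opNorm_le_of_forall_apply_eq hp (fun v i => by simp [hT]) (by positivity) hdiff
    _ < ε := half_lt_self hε

end Substitution

theorem substitution_operator_C1_general {d : ℕ}
    (f : ℤ → EuclideanSpace ℝ (Fin d) → EuclideanSpace ℝ (Fin d))
    (hC1 : ∀ n, ContDiff ℝ 1 (f n))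
    (hequi : ∀ M > (0 : ℝ), ∀ ε > (0 : ℝ), ∃ δ > (0 : ℝ),
      ∀ y₁ y₂ : EuclideanSpace ℝ (Fin d), ‖y₁‖ ≤ M → ‖y₂‖ ≤ M → ‖y₁ - y₂‖ < δ →
        ∀ n, ‖fderiv ℝ (f n) y₁ - fderiv ℝ (f n) y₂‖ < ε)
    (F : L2 d → L2 d) (hF : ∀ (x : L2 d) (n : ℤ), (F x) n = f n (x n))
    (T : L2 d → (L2 d →L[ℝ] L2 d))
    (hT : ∀ (x y : L2 d) (n : ℤ), (T x y) n = fderiv ℝ (f n) (x n) (y n)) :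
    (∀ x : L2 d, HasFDerivAt F (T x) x) ∧ Continuous T :=
  ⟨hasFDerivAt_lp_substitution ENNReal.ofNat_ne_top
      (fun n => (hC1 n).differentiable one_ne_zero) hequi hT hF,
    continuous_lp_substitution_fderiv ENNReal.ofNat_ne_top hequi hT⟩

/-- Under the standing hypotheses (`f_n` is `C¹`, `f_n(0) = 0`, derivatives
equicontinuous uniformly in `n` on bounded sets, `sup_n ‖Df_n(0)‖ < ∞`), the
substitution operator `F(x) = (f_n(x(n)))` on `ℓ²(ℤ, ℝᵈ)` is Fréchet differentiable at
every point, with derivative the multiplication operator `y ↦ (Df_n(x(n)) y(n))`, and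
the derivative depends continuously (in operator norm) on `x`. -/
theorem substitution_operator_C1 {d : ℕ}
    (f : ℤ → EuclideanSpace ℝ (Fin d) → EuclideanSpace ℝ (Fin d))
    (hC1 : ∀ n, ContDiff ℝ 1 (f n))
    (hzero : ∀ n, f n 0 = 0)
    (hequi : ∀ M > (0 : ℝ), ∀ ε > (0 : ℝ), ∃ δ > (0 : ℝ),
      ∀ y₁ y₂ : EuclideanSpace ℝ (Fin d), ‖y₁‖ ≤ M → ‖y₂‖ ≤ M → ‖y₁ - y₂‖ < δ →
        ∀ n, ‖fderiv ℝ (f n) y₁ - fderiv ℝ (f n) y₂‖ < ε)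
    (hbdd0 : ∃ C₀ : ℝ, ∀ n, ‖fderiv ℝ (f n) 0‖ ≤ C₀)
    (F : L2 d → L2 d) (hF : ∀ (x : L2 d) (n : ℤ), (F x) n = f n (x n))
    (T : L2 d → (L2 d →L[ℝ] L2 d))
    (hT : ∀ (x y : L2 d) (n : ℤ), (T x y) n = fderiv ℝ (f n) (x n) (y n)) :
    (∀ x : L2 d, HasFDerivAt F (T x) x) ∧ Continuous T :=
  substitution_operator_C1_general f hC1 hequi F hF T hT
end
end

section
/- Let f_n: ℝᵈ → ℝᵈ be continuous with f_n(0) = 0, satisfying |f_n(y)| ≤ C|y| uniformly in n on bounded sets, and such that f_n → f₊ pointwise, uniformly on bounded sets, as n → +∞, with f₊ continuous. Then the substitution operator F: ℓ²(ℤ, ℝᵈ) → ℓ²(ℤ, ℝᵈ), F(x) = (f_n(x(n))), is weakly sequentially continuous: if x_k ⇀ x weakly in ℓ², then F(x_k) ⇀ F(x) weakly in ℓ². -/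
open Filter Topology
open scoped InnerProductSpace

noncomputable section

/-! A weakly convergent sequence in `ℓ²` is bounded (uniform boundedness principle) and its
coordinates converge, since weak and strong convergence agree in `ℝᵈ`. The linear bound keeps
the image sequence bounded and the continuity of each `f n` keeps its coordinates convergent.
Conversely, a bounded sequence with convergent coordinates converges weakly: the pairings
`⟪u k, ·⟫` are equicontinuous, so the set where they converge is closed, and it contains the
dense subspace of finitely supported sequences. -/

section WeakConvergence

variable {E : Type*} [NormedAddCommGroup E] [InnerProductSpace ℝ E]

theorem exists_norm_le_of_tendsto_inner [CompleteSpace E] {u : ℕ → E} {v : E}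
    (h : ∀ z, Tendsto (fun k => ⟪u k, z⟫_ℝ) atTop (𝓝 ⟪v, z⟫_ℝ)) : ∃ C, ∀ k, ‖u k‖ ≤ C := by
  have hpointwise : ∀ z, ∃ C, ∀ k, ‖innerSL ℝ (u k) z‖ ≤ C := fun z => by
    obtain ⟨C, hC⟩ := (h z).norm.bddAbove_range
    exact ⟨C, fun k => hC (Set.mem_range_self k)⟩
  obtain ⟨C, hC⟩ := banach_steinhaus hpointwise
  exact ⟨C, fun k => by simpa only [innerSL_apply_norm] using hC k⟩

theorem tendsto_of_tendsto_inner [FiniteDimensional ℝ E] {ι : Type*} {l : Filter ι}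
    {u : ι → E} {v : E} (h : ∀ z, Tendsto (fun k => ⟪u k, z⟫_ℝ) l (𝓝 ⟪v, z⟫_ℝ)) :
    Tendsto u l (𝓝 v) := by
  let b := stdOrthonormalBasis ℝ E
  have hsum := tendsto_finsetSum Finset.univ fun j _ => (h (b j)).smul_const (b j)
  simp only [real_inner_comm (b _), b.sum_repr'] at hsum
  exact hsum

end WeakConvergence

namespace lp

theorem norm_le_mul_norm_of_forall_le {α : Type*} {E F : α → Type*}
    [∀ i, NormedAddCommGroup (E i)] [∀ i, NormedAddCommGroup (F i)] [∀ i, NormedSpace ℝ (F i)]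
    {p : ENNReal} [Fact (1 ≤ p)] {x : lp E p} {y : lp F p} {C : ℝ} (hC : 0 ≤ C)
    (h : ∀ i, ‖x i‖ ≤ C * ‖y i‖) : ‖x‖ ≤ C * ‖y‖ := by
  calc ‖x‖ ≤ ‖C • y‖ := lp.norm_mono (zero_lt_one.trans_le Fact.out).ne' fun i => by
        rw [lp.coeFn_smul, Pi.smul_apply, norm_smul, Real.norm_of_nonneg hC]
        exact h i
    _ = C * ‖y‖ := by rw [norm_smul, Real.norm_of_nonneg hC]

variable {α : Type*} {G : α → Type*} [∀ i, NormedAddCommGroup (G i)]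
  [∀ i, InnerProductSpace ℝ (G i)] {ι : Type*} {l : Filter ι} {u : ι → lp G 2} {v : lp G 2}

theorem tendsto_apply_of_tendsto_inner [∀ i, FiniteDimensional ℝ (G i)]
    (h : ∀ z, Tendsto (fun k => ⟪u k, z⟫_ℝ) l (𝓝 ⟪v, z⟫_ℝ)) (i : α) :
    Tendsto (fun k => u k i) l (𝓝 (v i)) := by
  classical
  refine tendsto_of_tendsto_inner fun a => ?_
  simpa only [lp.inner_single_right] using h (lp.single 2 i a)

theorem tendsto_inner_of_tendsto_apply_s14 {C : ℝ} (hbdd : ∀ k, ‖u k‖ ≤ C)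
    (h : ∀ i, Tendsto (fun k => u k i) l (𝓝 (v i))) (z : lp G 2) :
    Tendsto (fun k => ⟪u k, z⟫_ℝ) l (𝓝 ⟪v, z⟫_ℝ) := by
  classical
  have hopnorm : ∃ C, ∀ k, ‖innerSL ℝ (u k)‖ ≤ C :=
    ⟨C, fun k => (innerSL_apply_norm ℝ (u k)).trans_le (hbdd k)⟩
  have hequi : Equicontinuous fun k => (innerSL ℝ (u k) : lp G 2 → ℝ) :=
    ((NormedSpace.equicontinuous_TFAE fun k => innerSL ℝ (u k)).out 5 1).mp hopnorm
  have hclosed := hequi.isClosed_setOfPred_tendsto (l := l) (innerSL ℝ v).continuous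
  refine hclosed.mem_of_tendsto (lp.hasSum_single ENNReal.ofNat_ne_top z) (.of_forall fun s => ?_)
  simp only [Set.mem_ofPred_eq, innerSL_apply_apply, inner_sum, lp.inner_single_right]
  exact tendsto_finsetSum s fun i _ => (h i).inner tendsto_const_nhds

end lp

theorem substitution_operator_weakly_continuous_general {d : ℕ}
    (f : ℤ → EuclideanSpace ℝ (Fin d) → EuclideanSpace ℝ (Fin d))
    (hcont : ∀ n, Continuous (f n))
    (hlin : ∀ M > (0 : ℝ), ∃ C : ℝ, ∀ (n : ℤ) (y : EuclideanSpace ℝ (Fin d)),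
      ‖y‖ ≤ M → ‖f n y‖ ≤ C * ‖y‖)
    (F : L2 d → L2 d) (hF : ∀ (x : L2 d) (n : ℤ), (F x) n = f n (x n)) :
    ∀ (x : L2 d) (xk : ℕ → L2 d),
      WeakTendsto xk x → WeakTendsto (fun k => F (xk k)) (F x) := by
  intro x xk hxk
  obtain ⟨B, hB⟩ := exists_norm_le_of_tendsto_inner hxk
  set M := max B 1
  have hxkM : ∀ k, ‖xk k‖ ≤ M := fun k => (hB k).trans (le_max_left B 1)
  obtain ⟨C, hC⟩ := hlin M (zero_lt_one.trans_le (le_max_right B 1))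
  have hFpointwise : ∀ k n, ‖F (xk k) n‖ ≤ max C 0 * ‖xk k n‖ := fun k n => by
    rw [hF]
    refine (hC n _ ((lp.norm_apply_le_norm two_ne_zero _ n).trans (hxkM k))).trans ?_
    gcongr
    exact le_max_left C 0
  have hFbdd : ∀ k, ‖F (xk k)‖ ≤ max C 0 * M := fun k =>
    (lp.norm_le_mul_norm_of_forall_le (le_max_right C 0) (hFpointwise k)).trans
      (mul_le_mul_of_nonneg_left (hxkM k) (le_max_right C 0))
  have hFcoord : ∀ n, Tendsto (fun k => F (xk k) n) atTop (𝓝 (F x n)) := fun n => by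
    simpa only [hF, Function.comp_def] using
      ((hcont n).tendsto _).comp (lp.tendsto_apply_of_tendsto_inner hxk n)
  exact lp.tendsto_inner_of_tendsto_apply_s14 hFbdd hFcoord

/-- If the `f_n` are continuous with `f_n(0) = 0`, satisfy a uniform linear bound on
bounded sets, and converge to a continuous map `f₊` uniformly on bounded sets as
`n → +∞`, then the substitution operator `F(x) = (f_n(x(n)))` on `ℓ²(ℤ, ℝᵈ)` is weakly
sequentially continuous. -/
theorem substitution_operator_weakly_continuous {d : ℕ}
    (f : ℤ → EuclideanSpace ℝ (Fin d) → EuclideanSpace ℝ (Fin d))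
    (hcont : ∀ n, Continuous (f n))
    (hzero : ∀ n, f n 0 = 0)
    (hlin : ∀ M > (0 : ℝ), ∃ C : ℝ, ∀ (n : ℤ) (y : EuclideanSpace ℝ (Fin d)),
      ‖y‖ ≤ M → ‖f n y‖ ≤ C * ‖y‖)
    (fplus : EuclideanSpace ℝ (Fin d) → EuclideanSpace ℝ (Fin d))
    (hfplus_cont : Continuous fplus)
    (hconv : ∀ M > (0 : ℝ), ∀ ε > (0 : ℝ), ∃ N : ℤ, ∀ n ≥ N,
      ∀ y : EuclideanSpace ℝ (Fin d), ‖y‖ ≤ M → ‖f n y - fplus y‖ < ε)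
    (F : L2 d → L2 d) (hF : ∀ (x : L2 d) (n : ℤ), (F x) n = f n (x n)) :
    ∀ (x : L2 d) (xk : ℕ → L2 d),
      WeakTendsto xk x → WeakTendsto (fun k => F (xk k)) (F x) :=
  substitution_operator_weakly_continuous_general f hcont hlin F hF
end
end
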